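/- Let G be a temporal graph with Δ₂ > Δ₁ > 1 consisting of vertices {a,b,c,d,e} with time-edges (ab,2), (ac,1), (bc,1), (cd,Δ₂+2), (ce,Δ₂+2), (de,Δ₂+1). Then G is not a (Δ₁,Δ₂)-cluster temporal graph, but for every subset S of at most 4 vertices, G[S] is a (Δ₁,Δ₂)-cluster temporal graph. -/

import Mathlib

/-- A time-edge: an (undirected) edge together with a time label. -/
abbrev TimeEdge := Sym2 ℕ × ℕ

/-- Vertices appearing in a set of time-edges. -/
def verts (S : Set TimeEdge) : Set ℕ := {v | ∃ te ∈ S, v ∈ te.1}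

/-- Times appearing in a set of time-edges. -/
def times (S : Set TimeEdge) : Set ℕ := Prod.snd '' S

/-- The lifetime interval of a set of time-edges. -/
def lifetime (S : Set TimeEdge) : Set ℕ := Set.Icc (sInf (times S)) (sSup (times S))

/-- Two sets of time-edges are Δ₂-independent if their vertex sets are disjoint or
their lifetime intervals are at temporal distance at least Δ₂. -/
def Indep (Δ₂ : ℕ) (S₁ S₂ : Set TimeEdge) : Prop :=
  Disjoint (verts S₁) (verts S₂) ∨
    ∀ s ∈ lifetime S₁, ∀ t ∈ lifetime S₂, Δ₂ ≤ max s t - min s t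

/-- A set of time-edges is Δ₂-indivisible if it cannot be partitioned into two or more
nonempty pairwise Δ₂-independent subsets. -/
def Indivisible (Δ₂ : ℕ) (S : Set TimeEdge) : Prop :=
  ¬ ∃ P : Set (Set TimeEdge), P.Nontrivial ∧ (∀ A ∈ P, A.Nonempty) ∧
      ⋃₀ P = S ∧ P.PairwiseDisjoint id ∧ P.Pairwise (Indep Δ₂)

/-- The edge `e` is Δ₁-dense in `[a,b]` with respect to the time-edge set `S`. -/
def DenseIn (S : Set TimeEdge) (Δ₁ : ℕ) (e : Sym2 ℕ) (a b : ℕ) : Prop :=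
  ∀ τ ∈ Set.Icc a (max a (b + 1 - Δ₁)), ∃ t, t ∈ Set.Icc τ (τ + Δ₁ - 1) ∧ (e, t) ∈ S

/-- A set of time-edges forms a Δ₁-temporal clique if every pair of its vertices is
joined by an edge Δ₁-dense in its lifetime. -/
def IsTemporalClique (Δ₁ : ℕ) (K : Set TimeEdge) : Prop :=
  ∀ x ∈ verts K, ∀ y ∈ verts K, x ≠ y →
    DenseIn K Δ₁ s(x, y) (sInf (times K)) (sSup (times K))

/-- A (Δ₁,Δ₂)-cluster temporal graph: the time-edges partition into pairwise
Δ₂-independent Δ₁-temporal cliques. -/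
def IsClusterTemporalGraph (Δ₁ Δ₂ : ℕ) (E : Set TimeEdge) : Prop :=
  ∃ P : Set (Set TimeEdge), ⋃₀ P = E ∧ P.PairwiseDisjoint id ∧
    (∀ K ∈ P, IsTemporalClique Δ₁ K) ∧ P.Pairwise (Indep Δ₂)

/-- A Δ₂-saturated set of time-edges in `E`: a Δ₂-indivisible subset of `E` such that
adding any other time-edge of `E` destroys indivisibility. -/
def Saturated (Δ₂ : ℕ) (E S : Set TimeEdge) : Prop :=
  S ⊆ E ∧ Indivisible Δ₂ S ∧ ∀ te ∈ E, te ∉ S → ¬ Indivisible Δ₂ (insert te S)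

/-- The induced temporal subgraph on a vertex set `A`. -/
def induced (E : Set TimeEdge) (A : Set ℕ) : Set TimeEdge :=
  {te ∈ E | ∀ v ∈ te.1, v ∈ A}

/-- Two single time-edges are Δ-independent. -/
def TEIndep (Δ : ℕ) (te₁ te₂ : TimeEdge) : Prop :=
  (∀ v ∈ te₁.1, v ∉ te₂.1) ∨ Δ ≤ max te₁.2 te₂.2 - min te₁.2 te₂.2


/-!
The two time-1 edges at vertex 2 are not Δ₂-independent, so a cluster partition puts them into one
clique, which must then also contain an edge 01, namely (01, 2); likewise the edges 23, 24 at time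
Δ₂ + 2 force a clique containing (34, Δ₂ + 1). The two cliques differ, since no edge joins 0 and 3,
yet they share vertex 2 and their lifetimes contain 2 and Δ₂ + 1, at distance Δ₂ - 1 < Δ₂.

Deleting any vertex resolves the conflict: without vertex 2 the triangles are vertex-disjoint,
without 0 or 1 the first lifetime shrinks to {1}, without 3 or 4 the second shrinks to {Δ₂ + 2}.
The two induced triangles are then cliques, being complete and living in windows of length 2 ≤ Δ₁.
-/

open Set

variable {Δ₁ Δ₂ : ℕ}

-- Finiteness matters: `sSup` of an unbounded set of naturals is `0`.
theorem mem_lifetime {S : Set TimeEdge} (hS : S.Finite) {te : TimeEdge} (h : te ∈ S) :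
    te.2 ∈ lifetime S :=
  ⟨Nat.sInf_le ⟨te, h, rfl⟩, le_csSup (hS.image _).bddAbove ⟨te, h, rfl⟩⟩

theorem Indep.symm {S₁ S₂ : Set TimeEdge} (h : Indep Δ₂ S₁ S₂) : Indep Δ₂ S₂ S₁ :=
  h.imp (fun h => h.symm) fun h s hs t ht => by rw [max_comm, min_comm]; exact h t ht s hs

theorem not_indep_of_close {S₁ S₂ : Set TimeEdge} {v s t : ℕ} (hv₁ : v ∈ verts S₁)
    (hv₂ : v ∈ verts S₂) (hs : s ∈ lifetime S₁) (ht : t ∈ lifetime S₂)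
    (hst : max s t - min s t < Δ₂) : ¬ Indep Δ₂ S₁ S₂ := by
  rintro (h | h)
  · exact disjoint_left.1 h hv₁ hv₂
  · exact (h s hs t ht).not_gt hst

theorem indep_of_le_of_add_le {S₁ S₂ : Set TimeEdge} {s₀ : ℕ} (h₁ : ∀ te ∈ S₁, te.2 ∈ Iic s₀)
    (h₂ : ∀ te ∈ S₂, te.2 ∈ Ici (Δ₂ + s₀)) : Indep Δ₂ S₁ S₂ := by
  -- `lifetime ∅ = {0}`, so an empty `S₂` is handled by the vertex clause instead.
  rcases S₂.eq_empty_or_nonempty with rfl | ⟨te₂, hte₂⟩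
  · left
    simp [verts]
  right
  rintro s ⟨-, hs⟩ t ⟨ht, -⟩
  have hs₀ : sSup (times S₁) ≤ s₀ := csSup_le' (by rintro _ ⟨te, hte, rfl⟩; exact h₁ te hte)
  have ht₀ : Δ₂ + s₀ ≤ sInf (times S₂) :=
    le_csInf ⟨_, te₂, hte₂, rfl⟩ (by rintro _ ⟨te, hte, rfl⟩; exact h₂ te hte)
  omega

theorem induced_union (S T : Set TimeEdge) (A : Set ℕ) :
    induced (S ∪ T) A = induced S A ∪ induced T A :=
  sep_union

theorem verts_induced_subset (S : Set TimeEdge) (A : Set ℕ) : verts (induced S A) ⊆ verts S ∩ A :=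
  fun v ⟨te, ⟨hte, hA⟩, hv⟩ => ⟨⟨te, hte, hv⟩, hA v hv⟩

def IsFootprintComplete (K : Set TimeEdge) : Prop :=
  ∀ x ∈ verts K, ∀ y ∈ verts K, x ≠ y → ∃ t, (s(x, y), t) ∈ K

theorem IsFootprintComplete.induced {K : Set TimeEdge} (hK : IsFootprintComplete K) (A : Set ℕ) :
    IsFootprintComplete (induced K A) := by
  rintro x ⟨tex, ⟨htex, hAx⟩, hx⟩ y ⟨tey, ⟨htey, hAy⟩, hy⟩ hxy
  obtain ⟨t, ht⟩ := hK x ⟨tex, htex, hx⟩ y ⟨tey, htey, hy⟩ hxy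
  refine ⟨t, ht, fun v hv => ?_⟩
  rcases Sym2.mem_iff.1 hv with rfl | rfl
  exacts [hAx v hx, hAy v hy]

theorem IsTemporalClique.isFootprintComplete {K : Set TimeEdge} (h : IsTemporalClique Δ₁ K) :
    IsFootprintComplete K := fun x hx y hy hxy =>
  let ⟨t, _, ht⟩ := h x hx y hy hxy _ ⟨le_rfl, le_max_left _ _⟩
  ⟨t, ht⟩

theorem IsFootprintComplete.isTemporalClique {K : Set TimeEdge} (hK : IsFootprintComplete K)
    {m : ℕ} (hm : ∀ te ∈ K, te.2 ∈ Ico m (m + Δ₁)) : IsTemporalClique Δ₁ K := by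
  intro x hx y hy hxy τ hτ
  obtain ⟨t, ht⟩ := hK x hx y hy hxy
  have hne : (times K).Nonempty := ⟨_, _, ht, rfl⟩
  have hlo : m ≤ sInf (times K) := le_csInf hne (by rintro _ ⟨te, hte, rfl⟩; exact (hm te hte).1)
  have hhi : sSup (times K) < m + Δ₁ := by
    obtain ⟨te, hte, hsup⟩ := Nat.sSup_mem hne
      ⟨m + Δ₁, by rintro _ ⟨te, hte, rfl⟩; exact (hm te hte).2.le⟩
    exact hsup ▸ (hm te hte).2
  have htK : sInf (times K) ≤ t := Nat.sInf_le ⟨_, ht, rfl⟩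
  have := (hm _ ht).2
  simp only [mem_Icc] at hτ ⊢
  exact ⟨t, ⟨by omega, by omega⟩, ht⟩

def IsClusterPartition (Δ₁ Δ₂ : ℕ) (E : Set TimeEdge) (P : Set (Set TimeEdge)) : Prop :=
  ⋃₀ P = E ∧ P.PairwiseDisjoint id ∧ (∀ K ∈ P, IsTemporalClique Δ₁ K) ∧ P.Pairwise (Indep Δ₂)

theorem isClusterTemporalGraph_iff {E : Set TimeEdge} :
    IsClusterTemporalGraph Δ₁ Δ₂ E ↔ ∃ P, IsClusterPartition Δ₁ Δ₂ E P :=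
  Iff.rfl

theorem isClusterTemporalGraph_union {K₁ K₂ : Set TimeEdge} (h₁ : IsTemporalClique Δ₁ K₁)
    (h₂ : IsTemporalClique Δ₁ K₂) (hd : Disjoint K₁ K₂) (hi : Indep Δ₂ K₁ K₂) :
    IsClusterTemporalGraph Δ₁ Δ₂ (K₁ ∪ K₂) := by
  refine ⟨{K₁, K₂}, sUnion_pair K₁ K₂, ?_, by rintro K (rfl | rfl) <;> assumption, ?_⟩
  · exact pairwise_pair.2 fun _ => ⟨hd, hd.symm⟩
  · exact pairwise_pair.2 fun _ => ⟨hi, hi.symm⟩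

namespace IsClusterPartition

variable {E : Set TimeEdge} {P : Set (Set TimeEdge)}

theorem subset (hP : IsClusterPartition Δ₁ Δ₂ E P) {K : Set TimeEdge} (hK : K ∈ P) : K ⊆ E :=
  hP.1 ▸ subset_sUnion_of_mem hK

theorem isTemporalClique (hP : IsClusterPartition Δ₁ Δ₂ E P) {K : Set TimeEdge} (hK : K ∈ P) :
    IsTemporalClique Δ₁ K :=
  hP.2.2.1 K hK

theorem exists_mem (hP : IsClusterPartition Δ₁ Δ₂ E P) {te : TimeEdge} (h : te ∈ E) :
    ∃ K ∈ P, te ∈ K :=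
  mem_sUnion.1 (hP.1 ▸ h)

theorem eq_of_close (hP : IsClusterPartition Δ₁ Δ₂ E P) {K L : Set TimeEdge} (hK : K ∈ P)
    (hL : L ∈ P) {v s t : ℕ} (hvK : v ∈ verts K) (hvL : v ∈ verts L) (hs : s ∈ lifetime K)
    (ht : t ∈ lifetime L) (hst : max s t - min s t < Δ₂) : K = L :=
  hP.2.2.2.eq hK hL (not_indep_of_close hvK hvL hs ht hst)

theorem eq_and_exists_mem_of_wedge (hP : IsClusterPartition Δ₁ Δ₂ E P) (hE : E.Finite)
    (hΔ₂ : 0 < Δ₂) {K L : Set TimeEdge} (hK : K ∈ P) (hL : L ∈ P) {te₁ te₂ : TimeEdge}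
    (h₁ : te₁ ∈ K) (h₂ : te₂ ∈ L) (htime : te₁.2 = te₂.2) {a b c : ℕ} (ha : a ∈ te₁.1)
    (hb : b ∈ te₂.1) (hc₁ : c ∈ te₁.1) (hc₂ : c ∈ te₂.1) (hab : a ≠ b) :
    K = L ∧ ∃ t, (s(a, b), t) ∈ K := by
  obtain rfl : K = L := hP.eq_of_close hK hL ⟨_, h₁, hc₁⟩ ⟨_, h₂, hc₂⟩
    (mem_lifetime (hE.subset (hP.subset hK)) h₁) (mem_lifetime (hE.subset (hP.subset hL)) h₂)
    (by simpa [htime] using hΔ₂)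
  exact ⟨rfl, (hP.isTemporalClique hK).isFootprintComplete a ⟨_, h₁, ha⟩ b ⟨_, h₂, hb⟩ hab⟩

end IsClusterPartition

def triangle (a b c tab tac tbc : ℕ) : Set TimeEdge :=
  {(s(a, b), tab), (s(a, c), tac), (s(b, c), tbc)}

theorem mem_verts_triangle {a b c tab tac tbc v : ℕ} (hv : v ∈ verts (triangle a b c tab tac tbc)) :
    v = a ∨ v = b ∨ v = c := by
  obtain ⟨te, hte, hv⟩ := hv
  simp only [triangle, mem_insert_iff, mem_singleton_iff] at hte
  rcases hte with rfl | rfl | rfl <;> rcases Sym2.mem_iff.1 hv with rfl | rfl <;> simp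

theorem isFootprintComplete_triangle (a b c tab tac tbc : ℕ) :
    IsFootprintComplete (triangle a b c tab tac tbc) := by
  intro x hx y hy hxy
  rcases mem_verts_triangle hx with rfl | rfl | rfl <;>
    rcases mem_verts_triangle hy with rfl | rfl | rfl <;>
    simp_all [triangle, exists_or]

theorem forall_mem_induced_triangle {S : Set ℕ} {a b c tab tac tbc : ℕ} {A : Set ℕ}
    (hab : a ∈ A → b ∈ A → tab ∈ S) (hac : a ∈ A → c ∈ A → tac ∈ S)
    (hbc : b ∈ A → c ∈ A → tbc ∈ S) : ∀ te ∈ induced (triangle a b c tab tac tbc) A, te.2 ∈ S := by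
  rintro te ⟨hte, hA⟩
  simp only [triangle, mem_insert_iff, mem_singleton_iff] at hte
  rcases hte with rfl | rfl | rfl
  exacts [hab (hA a (by simp)) (hA b (by simp)), hac (hA a (by simp)) (hA c (by simp)),
    hbc (hA b (by simp)) (hA c (by simp))]

theorem isTemporalClique_induced_triangle {a b c tab tac tbc m : ℕ} (hab : tab ∈ Ico m (m + Δ₁))
    (hac : tac ∈ Ico m (m + Δ₁)) (hbc : tbc ∈ Ico m (m + Δ₁)) (A : Set ℕ) :
    IsTemporalClique Δ₁ (induced (triangle a b c tab tac tbc) A) :=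
  ((isFootprintComplete_triangle a b c tab tac tbc).induced A).isTemporalClique
    (forall_mem_induced_triangle (fun _ _ => hab) (fun _ _ => hac) (fun _ _ => hbc))

def counterexampleGraph (Δ₂ : ℕ) : Set TimeEdge :=
  triangle 0 1 2 2 1 1 ∪ triangle 2 3 4 (Δ₂ + 2) (Δ₂ + 2) (Δ₂ + 1)

theorem counterexampleGraph_finite (Δ₂ : ℕ) : (counterexampleGraph Δ₂).Finite := by
  simp [counterexampleGraph, triangle]

theorem not_isClusterTemporalGraph_counterexampleGraph (hΔ₂ : 0 < Δ₂) :
    ¬ IsClusterTemporalGraph Δ₁ Δ₂ (counterexampleGraph Δ₂) := by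
  intro h
  obtain ⟨P, hP⟩ := isClusterTemporalGraph_iff.1 h
  have hfin := counterexampleGraph_finite Δ₂
  obtain ⟨K, hK, h02⟩ :=
    hP.exists_mem (te := (s(0, 2), 1)) (by simp [counterexampleGraph, triangle])
  obtain ⟨K', hK', h12⟩ :=
    hP.exists_mem (te := (s(1, 2), 1)) (by simp [counterexampleGraph, triangle])
  obtain ⟨rfl, t, h01⟩ := hP.eq_and_exists_mem_of_wedge hfin hΔ₂ hK hK' h02 h12 rfl
    (a := 0) (b := 1) (c := 2) (by simp) (by simp) (by simp) (by simp) (by decide)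
  obtain rfl : t = 2 := by simpa [counterexampleGraph, triangle] using hP.subset hK h01
  obtain ⟨L, hL, h23⟩ :=
    hP.exists_mem (te := (s(2, 3), Δ₂ + 2)) (by simp [counterexampleGraph, triangle])
  obtain ⟨L', hL', h24⟩ :=
    hP.exists_mem (te := (s(2, 4), Δ₂ + 2)) (by simp [counterexampleGraph, triangle])
  obtain ⟨rfl, t, h34⟩ := hP.eq_and_exists_mem_of_wedge hfin hΔ₂ hL hL' h23 h24 rfl
    (a := 3) (b := 4) (c := 2) (by simp) (by simp) (by simp) (by simp) (by decide)
  obtain rfl : t = Δ₂ + 1 := by simpa [counterexampleGraph, triangle] using hP.subset hL h34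
  have hKL : K ≠ L := by
    rintro rfl
    obtain ⟨t, h03⟩ := (hP.isTemporalClique hK).isFootprintComplete
      0 ⟨_, h01, by simp⟩ 3 ⟨_, h34, by simp⟩ (by decide)
    simpa [counterexampleGraph, triangle] using hP.subset hK h03
  exact hKL <| hP.eq_of_close hK hL (v := 2) ⟨_, h02, by simp⟩ ⟨_, h23, by simp⟩
    (mem_lifetime (hfin.subset (hP.subset hK)) h01) (mem_lifetime (hfin.subset (hP.subset hL)) h34)
    (by omega)

theorem isClusterTemporalGraph_induced_counterexampleGraph (hΔ₁ : 1 < Δ₁) {A : Set ℕ}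
    (hA : ¬ {0, 1, 2, 3, 4} ⊆ A) :
    IsClusterTemporalGraph Δ₁ Δ₂ (induced (counterexampleGraph Δ₂) A) := by
  rw [counterexampleGraph, induced_union]
  refine isClusterTemporalGraph_union ?_ ?_ ?_ ?_
  · exact isTemporalClique_induced_triangle (m := 1) (by constructor <;> omega)
      (by constructor <;> omega) (by constructor <;> omega) A
  · exact isTemporalClique_induced_triangle (m := Δ₂ + 1) (by constructor <;> omega)
      (by constructor <;> omega) (by constructor <;> omega) A
  · exact Disjoint.mono (fun _ h => h.1) (fun _ h => h.1) (by simp [triangle])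
  by_cases h2 : 2 ∉ A
  · refine Or.inl (disjoint_left.2 fun v hv₁ hv₂ => h2 ?_)
    obtain ⟨hv₁, hvA⟩ := verts_induced_subset _ _ hv₁
    have := mem_verts_triangle hv₁
    have := mem_verts_triangle (verts_induced_subset _ _ hv₂).1
    obtain rfl : v = 2 := by omega
    exact hvA
  by_cases h01 : 0 ∈ A ∧ 1 ∈ A
  · have h34 : ¬ (3 ∈ A ∧ 4 ∈ A) := fun h34 => hA <| by
      intro v hv
      simp only [mem_insert_iff, mem_singleton_iff] at hv
      rcases hv with rfl | rfl | rfl | rfl | rfl <;> tauto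
    exact indep_of_le_of_add_le (s₀ := 2)
      (forall_mem_induced_triangle (by simp) (by simp) (by simp))
      (forall_mem_induced_triangle (by simp) (by simp) fun h3 h4 => absurd ⟨h3, h4⟩ h34)
  · exact indep_of_le_of_add_le (s₀ := 1)
      (forall_mem_induced_triangle (fun h0 h1 => absurd ⟨h0, h1⟩ h01) (by simp) (by simp))
      (forall_mem_induced_triangle (by simp) (by simp) (by simp))

theorem counterexample_four_vertices (Δ₁ Δ₂ : ℕ) (h1 : 1 < Δ₁) (h2 : Δ₁ < Δ₂)
    (E : Set TimeEdge)
    (hE : E = {(s(0, 1), 2), (s(0, 2), 1), (s(1, 2), 1),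
               (s(2, 3), Δ₂ + 2), (s(2, 4), Δ₂ + 2), (s(3, 4), Δ₂ + 1)}) :
    ¬ IsClusterTemporalGraph Δ₁ Δ₂ E ∧
      ∀ A : Set ℕ, A.Finite → A.ncard ≤ 4 →
        IsClusterTemporalGraph Δ₁ Δ₂ (induced E A) := by
  obtain rfl : E = counterexampleGraph Δ₂ := by
    simp only [hE, counterexampleGraph, triangle, insert_union, singleton_union]
  refine ⟨not_isClusterTemporalGraph_counterexampleGraph (by omega), fun A hA hcard => ?_⟩
  refine isClusterTemporalGraph_induced_counterexampleGraph h1 fun h => ?_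
  have h5 : ({0, 1, 2, 3, 4} : Set ℕ).ncard = 5 := by simp [ncard_insert_of_notMem]
  have := ncard_le_ncard h hA
  omega
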